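/- (Identities (24) for the direction Ŷ constructed in the proof of Lemma 3.) Let X̂, Z ∈ ℝ^{n×r}, let P ∈ ℝ^{n×n} be the orthogonal projection onto the column space of X̂ and P⊥ = I_n − P, and let R ∈ ℝ^{r×r} be any matrix with PZ = X̂R. Define Ŷ = ½X̂ − ½X̂RRᵀ − P⊥ZRᵀ. Then: X̂Ŷᵀ + ŶX̂ᵀ − P⊥ZZᵀP⊥ = X̂X̂ᵀ − ZZᵀ, and ⟨X̂Ŷᵀ + ŶX̂ᵀ, P⊥ZZᵀP⊥⟩ = 0, where ⟨A,B⟩ = tr(AᵀB) is the Frobenius inner product. -/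

import Mathlib

open scoped BigOperators
open Matrix

noncomputable section

/-- Euclidean norm of a real vector indexed by `Fin k`. -/
def enorm {k : ℕ} (v : Fin k → ℝ) : ℝ := Real.sqrt (∑ i, (v i) ^ 2)

/-- Frobenius norm of a real matrix. -/
def fnorm {a b : ℕ} (M : Matrix (Fin a) (Fin b) ℝ) : ℝ :=
  Real.sqrt (∑ i, ∑ j, (M i j) ^ 2)

/-- Frobenius inner product of two real matrices. -/
def finner {a b : ℕ} (M N : Matrix (Fin a) (Fin b) ℝ) : ℝ := ∑ i, ∑ j, M i j * N i j

open Classical in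
/-- The `i`-th largest eigenvalue (`0`-indexed, i.e. `eigval M 0` is the largest
eigenvalue and `eigval M ⟨k-1,_⟩` the smallest) of a real symmetric matrix
(junk value `0` if the matrix is not symmetric). -/
def eigval {k : ℕ} (M : Matrix (Fin k) (Fin k) ℝ) (i : Fin k) : ℝ :=
  if h : M.IsHermitian then
    h.eigenvalues (Tuple.sort h.eigenvalues ⟨k - 1 - i.val, by have := i.isLt; omega⟩)
  else 0

/-- Spectral norm of a real matrix: `√(λ₁(XᵀX))`. -/
def specNorm {a b : ℕ} (X : Matrix (Fin a) (Fin b) ℝ) : ℝ :=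
  if hb : 0 < b then Real.sqrt (eigval (Xᵀ * X) ⟨0, hb⟩) else 0

/-- Smallest singular value `σ_b(X)` of `X ∈ ℝ^{a×b}`: the square root of the
smallest eigenvalue of `XᵀX`. -/
def sigmaMin {a b : ℕ} (X : Matrix (Fin a) (Fin b) ℝ) : ℝ :=
  if hb : 0 < b then Real.sqrt (eigval (Xᵀ * X) ⟨b - 1, by omega⟩) else 0

/-- Vectorization of a square matrix. -/
def vecSq {n : ℕ} (M : Matrix (Fin n) (Fin n) ℝ) : Fin (n * n) → ℝ :=
  fun k => M (finProdFinEquiv.symm k).1 (finProdFinEquiv.symm k).2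

/-- Vectorization of an `n × r` matrix. -/
def vecR {n r : ℕ} (U : Matrix (Fin n) (Fin r) ℝ) : Fin (n * r) → ℝ :=
  fun k => U (finProdFinEquiv.symm k).1 (finProdFinEquiv.symm k).2

/-- `mat_S(v) = (V + Vᵀ)/2` where `vec V = v`. -/
def matS {n : ℕ} (v : Fin (n * n) → ℝ) : Matrix (Fin n) (Fin n) ℝ :=
  (1 / 2 : ℝ) • ((Matrix.of fun i j => v (finProdFinEquiv (i, j))) +
    (Matrix.of fun i j => v (finProdFinEquiv (i, j)))ᵀ)

/-- The sensing operator `𝒜(M) = (⟨A₁,M⟩, …, ⟨A_m,M⟩)`. -/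
def calA {n m : ℕ} (A : Fin m → Matrix (Fin n) (Fin n) ℝ)
    (M : Matrix (Fin n) (Fin n) ℝ) : Fin m → ℝ := fun i => finner (A i) M

/-- Matrix representation `𝐀 ∈ ℝ^{m×n²}` of `𝒜`, satisfying `𝐀 ⬝ vec M = 𝒜(M)`. -/
def bigA {n m : ℕ} (A : Fin m → Matrix (Fin n) (Fin n) ℝ) :
    Matrix (Fin m) (Fin (n * n)) ℝ := Matrix.of fun i k => vecSq (A i) k

/-- `𝒜` satisfies the `(δ, g)`-RIP property. -/
def RIP {n m : ℕ} (A : Fin m → Matrix (Fin n) (Fin n) ℝ) (δ : ℝ) (g : ℕ) : Prop :=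
  ∀ M : Matrix (Fin n) (Fin n) ℝ, M.rank ≤ g →
    (1 - δ) * fnorm M ^ 2 ≤ _root_.enorm (calA A M) ^ 2 ∧
      _root_.enorm (calA A M) ^ 2 ≤ (1 + δ) * fnorm M ^ 2

/-- The matrix `𝐗̂ ∈ ℝ^{n² × nr}` satisfying `𝐗̂ ⬝ vec U = vec (X̂Uᵀ + UX̂ᵀ)`. -/
def bigX {n r : ℕ} (X : Matrix (Fin n) (Fin r) ℝ) :
    Matrix (Fin (n * n)) (Fin (n * r)) ℝ :=
  Matrix.of fun k l =>
    (if (finProdFinEquiv.symm k).2 = (finProdFinEquiv.symm l).1 then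
      X (finProdFinEquiv.symm k).1 (finProdFinEquiv.symm l).2 else 0) +
    (if (finProdFinEquiv.symm k).1 = (finProdFinEquiv.symm l).1 then
      X (finProdFinEquiv.symm k).2 (finProdFinEquiv.symm l).2 else 0)

/-- The Kronecker product `I_r ⊗ G`, realized as an operator on vectorized
`n × r` matrices (it sends `vec U` to `vec (G * U)`). -/
def kronIdR {n : ℕ} (r : ℕ) (G : Matrix (Fin n) (Fin n) ℝ) :
    Matrix (Fin (n * r)) (Fin (n * r)) ℝ :=
  Matrix.of fun k l =>
    if (finProdFinEquiv.symm k).2 = (finProdFinEquiv.symm l).2 then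
      G (finProdFinEquiv.symm k).1 (finProdFinEquiv.symm l).1 else 0

/-- Loewner order: `A ⪯ B` iff `B - A` is positive semidefinite. -/
def PSDle {k : ℕ} (A B : Matrix (Fin k) (Fin k) ℝ) : Prop := (B - A).PosSemidef

/-- The objective `f(X) = ½‖𝒜(XXᵀ) − b + w‖²` with `b = 𝒜(M*)`. -/
def fobj {n m r : ℕ} (A : Fin m → Matrix (Fin n) (Fin n) ℝ)
    (Mstar : Matrix (Fin n) (Fin n) ℝ) (w : Fin m → ℝ)
    (X : Matrix (Fin n) (Fin r) ℝ) : ℝ :=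
  (1 / 2) * _root_.enorm (fun i => calA A (X * Xᵀ) i - calA A Mstar i + w i) ^ 2

/-- View a point of Euclidean space as an `n × r` matrix. -/
def toMat {n r : ℕ} (x : EuclideanSpace ℝ (Fin n × Fin r)) : Matrix (Fin n) (Fin r) ℝ :=
  Matrix.of fun i j => x (i, j)

/-- View an `n × r` matrix as a point of Euclidean space (whose inner product is
the Frobenius inner product). -/
def vecE {n r : ℕ} (X : Matrix (Fin n) (Fin r) ℝ) : EuclideanSpace ℝ (Fin n × Fin r) :=
  WithLp.toLp 2 (fun p => X p.1 p.2)

/-- The objective as a function on Euclidean space. -/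
def fE {n m : ℕ} (r : ℕ) (A : Fin m → Matrix (Fin n) (Fin n) ℝ)
    (Mstar : Matrix (Fin n) (Fin n) ℝ) (w : Fin m → ℝ) :
    EuclideanSpace ℝ (Fin n × Fin r) → ℝ :=
  fun x => fobj A Mstar w (toMat x)

/-- Hessian quadratic form `D²f(X)[U, U]` (second Fréchet derivative). -/
def hessQF {n m : ℕ} (r : ℕ) (A : Fin m → Matrix (Fin n) (Fin n) ℝ)
    (Mstar : Matrix (Fin n) (Fin n) ℝ) (w : Fin m → ℝ)
    (X U : Matrix (Fin n) (Fin r) ℝ) : ℝ :=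
  iteratedFDeriv ℝ 2 (fE r A Mstar w) (vecE X) ![vecE U, vecE U]

/-- Gradient `∇f(X)` with respect to the Frobenius inner product, as a matrix. -/
def gradf {n m : ℕ} (r : ℕ) (A : Fin m → Matrix (Fin n) (Fin n) ℝ)
    (Mstar : Matrix (Fin n) (Fin n) ℝ) (w : Fin m → ℝ)
    (X : Matrix (Fin n) (Fin r) ℝ) : Matrix (Fin n) (Fin r) ℝ :=
  toMat (gradient (fE r A Mstar w) (vecE X))

/-! With `Q = I - P` one has `Q X̂ = 0` and `Z = X̂R + QZ`. The first identity is the expansion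
of `(X̂R + QZ)(X̂R + QZ)ᵀ`, valid for any `V` in place of `QZ`; the second holds because
`Q (X̂Ŷᵀ + ŶX̂ᵀ) Q = 0` and the trace is cyclic. -/

lemma finner_eq_trace {a b : ℕ} (M N : Matrix (Fin a) (Fin b) ℝ) :
    finner M N = trace (Mᵀ * N) := by
  simp only [finner, trace, diag, mul_apply, transpose_apply]
  exact Finset.sum_comm

section Symmetrized

variable {m k K : Type*} [Fintype k]

lemma mul_transpose_add_sub_eq [Field K] [CharZero K] (X V : Matrix m k K) (R : Matrix k k K) :
    X * ((1 / 2 : K) • X - (1 / 2 : K) • (X * R * Rᵀ) - V * Rᵀ)ᵀ +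
        ((1 / 2 : K) • X - (1 / 2 : K) • (X * R * Rᵀ) - V * Rᵀ) * Xᵀ - V * Vᵀ =
      X * Xᵀ - (X * R + V) * (X * R + V)ᵀ := by
  simp only [transpose_sub, transpose_smul, transpose_mul, transpose_add, transpose_transpose,
    Matrix.mul_sub, Matrix.sub_mul, Matrix.mul_add, Matrix.add_mul, Matrix.mul_smul,
    Matrix.smul_mul, Matrix.mul_assoc]
  module

lemma transpose_mul_transpose_add [CommRing K] (X Y : Matrix m k K) :
    (X * Yᵀ + Y * Xᵀ)ᵀ = X * Yᵀ + Y * Xᵀ := by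
  rw [transpose_add, transpose_mul, transpose_mul, transpose_transpose, transpose_transpose,
    add_comm]

lemma conj_mul_transpose_add_eq_zero [Fintype m] [CommRing K] {Q : Matrix m m K}
    {X : Matrix m k K} (hQ : Qᵀ = Q) (hQX : Q * X = 0) (Y : Matrix m k K) :
    Q * (X * Yᵀ + Y * Xᵀ) * Q = 0 := by
  have hXQ : Xᵀ * Q = 0 := by rw [← hQ, ← transpose_mul, hQX, transpose_zero]
  rw [Matrix.mul_add, Matrix.add_mul, ← Matrix.mul_assoc, hQX, Matrix.zero_mul, Matrix.zero_mul,
    zero_add, Matrix.mul_assoc, Matrix.mul_assoc, hXQ, Matrix.mul_zero, Matrix.mul_zero]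

end Symmetrized

lemma finner_mul_transpose_add_conj_eq_zero {n r : ℕ} {Q : Matrix (Fin n) (Fin n) ℝ}
    {X : Matrix (Fin n) (Fin r) ℝ} (hQ : Qᵀ = Q) (hQX : Q * X = 0)
    (Y : Matrix (Fin n) (Fin r) ℝ) (W : Matrix (Fin n) (Fin n) ℝ) :
    finner (X * Yᵀ + Y * Xᵀ) (Q * W * Q) = 0 := by
  rw [finner_eq_trace, transpose_mul_transpose_add, ← Matrix.mul_assoc, trace_mul_comm,
    ← Matrix.mul_assoc, ← Matrix.mul_assoc, conj_mul_transpose_add_eq_zero hQ hQX,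
    Matrix.zero_mul, trace_zero]

theorem statement8_general
    (n r : ℕ)
    (Xhat Z : Matrix (Fin n) (Fin r) ℝ)
    (P : Matrix (Fin n) (Fin n) ℝ)
    (hPsymm : Pᵀ = P) (hPX : P * Xhat = Xhat)
    (R : Matrix (Fin r) (Fin r) ℝ) (hR : P * Z = Xhat * R)
    (Yhat : Matrix (Fin n) (Fin r) ℝ)
    (hY : Yhat = (1 / 2 : ℝ) • Xhat - (1 / 2 : ℝ) • (Xhat * R * Rᵀ) - (1 - P) * Z * Rᵀ) :
    Xhat * Yhatᵀ + Yhat * Xhatᵀ - (1 - P) * (Z * Zᵀ) * (1 - P) =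
      Xhat * Xhatᵀ - Z * Zᵀ ∧
    finner (Xhat * Yhatᵀ + Yhat * Xhatᵀ) ((1 - P) * (Z * Zᵀ) * (1 - P)) = 0 := by
  have hQ : (1 - P)ᵀ = 1 - P := by rw [transpose_sub, transpose_one, hPsymm]
  have hQX : (1 - P) * Xhat = 0 := by rw [Matrix.sub_mul, hPX, Matrix.one_mul, sub_self]
  have hZ : Z = Xhat * R + (1 - P) * Z := by
    rw [Matrix.sub_mul, hR, Matrix.one_mul, add_sub_cancel]
  have hQZZQ : (1 - P) * (Z * Zᵀ) * (1 - P) = (1 - P) * Z * ((1 - P) * Z)ᵀ := by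
    rw [transpose_mul, hQ, Matrix.mul_assoc, Matrix.mul_assoc, Matrix.mul_assoc]
  refine ⟨?_, hY ▸ finner_mul_transpose_add_conj_eq_zero hQ hQX _ _⟩
  rw [hQZZQ, hY]
  conv_rhs => rw [hZ]
  exact mul_transpose_add_sub_eq Xhat ((1 - P) * Z) R

/-- identities (24) for the direction `Ŷ` in the proof of Lemma 3. -/
theorem statement8
    (n r : ℕ) (hrn : r ≤ n)
    (Xhat Z : Matrix (Fin n) (Fin r) ℝ)
    (P : Matrix (Fin n) (Fin n) ℝ)
    (hPsymm : Pᵀ = P) (hPidem : P * P = P) (hPX : P * Xhat = Xhat)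
    (hPrange : ∃ B : Matrix (Fin r) (Fin n) ℝ, P = Xhat * B)
    (R : Matrix (Fin r) (Fin r) ℝ) (hR : P * Z = Xhat * R)
    (Yhat : Matrix (Fin n) (Fin r) ℝ)
    (hY : Yhat = (1 / 2 : ℝ) • Xhat - (1 / 2 : ℝ) • (Xhat * R * Rᵀ) - (1 - P) * Z * Rᵀ) :
    Xhat * Yhatᵀ + Yhat * Xhatᵀ - (1 - P) * (Z * Zᵀ) * (1 - P) =
      Xhat * Xhatᵀ - Z * Zᵀ ∧
    finner (Xhat * Yhatᵀ + Yhat * Xhatᵀ) ((1 - P) * (Z * Zᵀ) * (1 - P)) = 0 :=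
  statement8_general n r Xhat Z P hPsymm hPX R hR Yhat hY
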